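/- arXiv:alg-geom/9507017 — 7 statements merged into one kernel-verified Lean document; each statement's English description precedes it below -/
import Mathlib

section
/- For every real number λ with λ ≠ a_k for all k, the following identity of real numbers holds: (∑_{k=1}^m x_k y_k/(a_k−λ))² − (∑_{k=1}^m x_k²/(a_k−λ))·(−1 + ∑_{k=1}^m y_k²/(a_k−λ)) = ∑_{k=1}^m F_k(x,y)/(a_k−λ). -/
open Finset

lemma double_sum_symm_eq {n : ℕ} (A B : Fin n → Fin n → ℝ)
    (h : ∀ k l, A k l + A l k = B k l + B l k) :
    ∑ k, ∑ l, A k l = ∑ k, ∑ l, B k l := by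
  have h1 : ∑ k, ∑ l, (A k l + A l k) = ∑ k, ∑ l, (B k l + B l k) :=
    Finset.sum_congr rfl fun k _ => Finset.sum_congr rfl fun l _ => h k l
  simp only [Finset.sum_add_distrib] at h1
  rw [Finset.sum_comm (f := fun k l => A l k),
      Finset.sum_comm (f := fun k l => B l k)] at h1
  linarith

/-- Partial-fraction expansion of the tangency condition for the line through `y`
in direction `x` with respect to the confocal quadrics `E_λ`. -/
theorem stmt0 (m : ℕ) (hm : 0 < m) (a : Fin m → ℝ) (ha : Function.Injective a)
    (x y : Fin m → ℝ) (lam : ℝ) (hlam : ∀ k, lam ≠ a k) :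
    (∑ k, x k * y k / (a k - lam)) ^ 2 -
        (∑ k, x k ^ 2 / (a k - lam)) * (-1 + ∑ k, y k ^ 2 / (a k - lam)) =
      ∑ k, (x k ^ 2 + ∑ l ∈ Finset.univ.erase k,
          (x k * y l - x l * y k) ^ 2 / (a k - a l)) / (a k - lam) := by
  have hf0 : ∀ k, a k - lam ≠ 0 := fun k => sub_ne_zero.mpr fun h => hlam k h.symm
  have ha0 : ∀ k l : Fin m, k ≠ l → a k - a l ≠ 0 :=
    fun k l h => sub_ne_zero.mpr fun e => h (ha e)
  have hRHS : ∀ k : Fin m,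
      (x k ^ 2 + ∑ l ∈ Finset.univ.erase k,
          (x k * y l - x l * y k) ^ 2 / (a k - a l)) / (a k - lam)
        = x k ^ 2 / (a k - lam)
          + ∑ l, (x k * y l - x l * y k) ^ 2 / ((a k - a l) * (a k - lam)) := by
    intro k
    rw [add_div, Finset.sum_div]
    congr 1
    calc ∑ l ∈ Finset.univ.erase k, (x k * y l - x l * y k) ^ 2 / (a k - a l) / (a k - lam)
        = ∑ l ∈ Finset.univ.erase k,
            (x k * y l - x l * y k) ^ 2 / ((a k - a l) * (a k - lam)) :=
          Finset.sum_congr rfl fun l _ => div_div _ _ _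
      _ = ∑ l, (x k * y l - x l * y k) ^ 2 / ((a k - a l) * (a k - lam)) :=
          Finset.sum_erase _ (by simp)
  simp only [hRHS]
  rw [Finset.sum_add_distrib]
  have key : (∑ k, x k * y k / (a k - lam)) ^ 2 -
      (∑ k, x k ^ 2 / (a k - lam)) * (∑ k, y k ^ 2 / (a k - lam)) =
      ∑ k, ∑ l, (x k * y l - x l * y k) ^ 2 / ((a k - a l) * (a k - lam)) := by
    rw [sq, Finset.sum_mul_sum, Finset.sum_mul_sum, ← Finset.sum_sub_distrib]
    simp only [← Finset.sum_sub_distrib]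
    apply double_sum_symm_eq
    intro k l
    by_cases hkl : k = l
    · subst hkl; simp; ring
    · have h1 := hf0 k
      have h2 := hf0 l
      have h3 := ha0 k l hkl
      have h4 := ha0 l k (Ne.symm hkl)
      field_simp
      ring
  linarith [key]
end

section
/- If ∑_{k=1}^m x_k² = 1 and ∑_{k=1}^m x_k y_k = 0, then (1/2)·∑_{k=1}^m a_k F_k(x,y) = (1/2)·∑_{k=1}^m a_k x_k² + (1/2)·∑_{k=1}^m y_k². (That is, on the tangent bundle TS of the unit sphere the Hamiltonian H = ½∑ a_k F_k equals Neumann's Hamiltonian ½∑ a_k x_k² + ½∑ y_k².) -/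
open Finset

/-- On the tangent bundle `TS` of the unit sphere, the Hamiltonian `H = ½∑ a_k F_k`
equals Neumann's Hamiltonian `½∑ a_k x_k² + ½∑ y_k²`. -/
theorem stmt2 (m : ℕ) (hm : 0 < m) (a : Fin m → ℝ) (ha : Function.Injective a)
    (x y : Fin m → ℝ) (hx : ∑ k, x k ^ 2 = 1) (hxy : ∑ k, x k * y k = 0) :
    (1 / 2) * ∑ k, a k * (x k ^ 2 + ∑ l ∈ Finset.univ.erase k,
        (x k * y l - x l * y k) ^ 2 / (a k - a l)) =
      (1 / 2) * ∑ k, a k * x k ^ 2 + (1 / 2) * ∑ k, y k ^ 2 := by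
  have herase : ∀ k : Fin m, ∑ l ∈ Finset.univ.erase k,
      (x k * y l - x l * y k) ^ 2 / (a k - a l)
      = ∑ l, (x k * y l - x l * y k) ^ 2 / (a k - a l) := by
    intro k
    apply Finset.sum_erase
    simp
  simp only [herase]
  -- Let T be the cross sum
  set T : ℝ := ∑ k, ∑ l, a k * ((x k * y l - x l * y k) ^ 2 / (a k - a l)) with hT
  have hmain : ∑ k, a k * (x k ^ 2 + ∑ l, (x k * y l - x l * y k) ^ 2 / (a k - a l))
      = (∑ k, a k * x k ^ 2) + T := by
    rw [hT, ← Finset.sum_add_distrib]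
    apply Finset.sum_congr rfl; intro k _
    rw [mul_add, Finset.mul_sum]
  have hswap : T = ∑ k, ∑ l, a l * ((x k * y l - x l * y k) ^ 2 / (a l - a k)) := by
    rw [hT, Finset.sum_comm]
    apply Finset.sum_congr rfl; intro k _
    apply Finset.sum_congr rfl; intro l _
    ring_nf
  have h2T : 2 * T = ∑ k, ∑ l, (x k * y l - x l * y k) ^ 2 := by
    have : 2 * T = T + T := by ring
    rw [this]
    nth_rewrite 2 [hswap]
    rw [hT, ← Finset.sum_add_distrib]
    apply Finset.sum_congr rfl; intro k _
    rw [← Finset.sum_add_distrib]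
    apply Finset.sum_congr rfl; intro l _
    by_cases hkl : k = l
    · subst hkl; simp
    · have h1 : a k - a l ≠ 0 := sub_ne_zero.mpr (fun h => hkl (ha h))
      have h2 : a l - a k ≠ 0 := sub_ne_zero.mpr (fun h => hkl (ha h.symm))
      field_simp
      ring
  have hLag : ∑ k, ∑ l, (x k * y l - x l * y k) ^ 2 = 2 * ∑ k, y k ^ 2 := by
    have hinner : ∀ k : Fin m, ∑ l, (x k * y l - x l * y k) ^ 2
        = x k ^ 2 * (∑ l, y l ^ 2) - 2 * (x k * y k) * (∑ l, x l * y l)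
          + y k ^ 2 * (∑ l, x l ^ 2) := by
      intro k
      rw [Finset.mul_sum, Finset.mul_sum, Finset.mul_sum, ← Finset.sum_sub_distrib,
        ← Finset.sum_add_distrib]
      apply Finset.sum_congr rfl; intros; ring
    simp only [hinner, hxy, hx, mul_zero, mul_one, sub_zero]
    rw [Finset.sum_add_distrib, ← Finset.sum_mul, hx]
    ring
  have hTval : T = ∑ k, y k ^ 2 := by linarith [h2T.trans hLag]
  rw [hmain, hTval]
  ring
end

section
/- Suppose a_1 < a_2 < … < a_m and every coordinate x_i is nonzero. Then the set S := {λ ∈ ℝ : λ ∉ {a_1,…,a_m} and ∑_{i=1}^m x_i²/(a_i−λ) = 1} has exactly m elements; moreover exactly one element of S lies in the interval (−∞, a_1), exactly one lies in each open interval (a_i, a_{i+1}) for 1 ≤ i ≤ m−1, and no element of S lies in (a_m, ∞). (In other words, through a point of ℝ^m with all coordinates nonzero pass exactly m of the confocal quadrics E_λ, with parameters interlacing the a_i.) -/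
open Finset Filter Set Topology

private lemma term_lt {m : ℕ} (a x : Fin m → ℝ) (j : Fin m) (hxj : x j ≠ 0)
    {l μ : ℝ} (h : l < μ) (hs : 0 < (a j - l) * (a j - μ)) :
    x j ^ 2 / (a j - l) < x j ^ 2 / (a j - μ) := by
  have h1 : a j - l ≠ 0 := by intro e; simp [e] at hs
  have h2 : a j - μ ≠ 0 := by intro e; simp [e] at hs
  have hx2 : (0:ℝ) < x j ^ 2 := by positivity
  have key : x j ^ 2 / (a j - μ) - x j ^ 2 / (a j - l)
      = x j ^ 2 * (μ - l) / ((a j - l) * (a j - μ)) := by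
    field_simp
    ring
  have hpos : 0 < x j ^ 2 * (μ - l) / ((a j - l) * (a j - μ)) :=
    div_pos (mul_pos hx2 (sub_pos.2 h)) hs
  linarith [key ▸ hpos]

private lemma F_smono {m : ℕ} (hm : 0 < m) (a x : Fin m → ℝ) (hx : ∀ i, x i ≠ 0) {s : Set ℝ}
    (hs : ∀ j : Fin m, ∀ l ∈ s, ∀ μ ∈ s, l < μ → 0 < (a j - l) * (a j - μ)) :
    StrictMonoOn (fun l => ∑ i, x i ^ 2 / (a i - l)) s := by
  intro l hl μ hμ h
  have : Nonempty (Fin m) := ⟨⟨0, hm⟩⟩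
  exact Finset.sum_lt_sum_of_nonempty univ_nonempty
    fun j _ => term_lt a x j (hx j) h (hs j l hl μ hμ h)

private lemma F_cont {m : ℕ} (a x : Fin m → ℝ) {s : Set ℝ} (hs : ∀ l ∈ s, ∀ i, l ≠ a i) :
    ContinuousOn (fun l => ∑ i, x i ^ 2 / (a i - l)) s := by
  apply continuousOn_finset_sum
  intro i _
  exact continuousOn_const.div ((continuous_const.sub continuous_id).continuousOn)
    fun l hl => sub_ne_zero.2 fun e => (hs l hl i) e.symm

/-- `F → +∞` as `l → (a j)⁻`. -/
private lemma F_top {m : ℕ} (a x : Fin m → ℝ) (hainj : Function.Injective a)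
    (j : Fin m) (hxj : x j ≠ 0) :
    Tendsto (fun l => ∑ i, x i ^ 2 / (a i - l)) (𝓝[<] (a j)) atTop := by
  have hx2 : (0:ℝ) < x j ^ 2 := by positivity
  have h0 : Tendsto (fun l => a j - l) (𝓝[<] (a j)) (𝓝[>] (0:ℝ)) := by
    rw [tendsto_nhdsWithin_iff]
    constructor
    · have h : Tendsto (fun l : ℝ => a j - l) (𝓝 (a j)) (𝓝 (a j - a j)) :=
        (continuous_const.sub continuous_id).tendsto _
      simpa using h.mono_left nhdsWithin_le_nhds
    · filter_upwards [self_mem_nhdsWithin] with l hl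
      exact sub_pos.2 (Set.mem_Iio.1 hl)
  have hmain : Tendsto (fun l => x j ^ 2 / (a j - l)) (𝓝[<] (a j)) atTop := by
    simp only [div_eq_mul_inv]
    exact (tendsto_inv_nhdsGT_zero.comp h0).const_mul_atTop hx2
  have hrest : Tendsto (fun l => ∑ i ∈ univ.erase j, x i ^ 2 / (a i - l)) (𝓝[<] (a j))
      (𝓝 (∑ i ∈ univ.erase j, x i ^ 2 / (a i - a j))) := by
    apply Tendsto.mono_left _ nhdsWithin_le_nhds
    apply tendsto_finset_sum
    intro i hi
    have hne : a i - a j ≠ 0 := sub_ne_zero.2 fun e => (Finset.mem_erase.1 hi).1 (hainj e)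
    exact tendsto_const_nhds.div
      (((continuous_const.sub continuous_id).tendsto (a j))) hne
  have hadd : Tendsto (fun l => x j ^ 2 / (a j - l) + ∑ i ∈ univ.erase j, x i ^ 2 / (a i - l))
      (𝓝[<] (a j)) atTop := by
    apply tendsto_atTop_add_right_of_le' _ ((∑ i ∈ univ.erase j, x i ^ 2 / (a i - a j)) - 1) hmain
    exact (hrest.eventually (eventually_gt_nhds (by linarith))).mono fun l h => le_of_lt h
  exact hadd.congr fun l => Finset.add_sum_erase _ _ (mem_univ j)

/-- `F → -∞` as `l → (a j)⁺`. -/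
private lemma F_bot {m : ℕ} (a x : Fin m → ℝ) (hainj : Function.Injective a)
    (j : Fin m) (hxj : x j ≠ 0) :
    Tendsto (fun l => ∑ i, x i ^ 2 / (a i - l)) (𝓝[>] (a j)) atBot := by
  have hx2 : (0:ℝ) < x j ^ 2 := by positivity
  have h0 : Tendsto (fun l => l - a j) (𝓝[>] (a j)) (𝓝[>] (0:ℝ)) := by
    rw [tendsto_nhdsWithin_iff]
    constructor
    · have h : Tendsto (fun l : ℝ => l - a j) (𝓝 (a j)) (𝓝 (a j - a j)) :=
        (continuous_id.sub continuous_const).tendsto _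
      simpa using h.mono_left nhdsWithin_le_nhds
    · filter_upwards [self_mem_nhdsWithin] with l hl
      exact sub_pos.2 (Set.mem_Ioi.1 hl)
  have hmain : Tendsto (fun l => x j ^ 2 / (a j - l)) (𝓝[>] (a j)) atBot := by
    have h1 : Tendsto (fun l => x j ^ 2 / (l - a j)) (𝓝[>] (a j)) atTop := by
      simp only [div_eq_mul_inv]
      exact (tendsto_inv_nhdsGT_zero.comp h0).const_mul_atTop hx2
    have h2 := tendsto_neg_atTop_atBot.comp h1
    refine h2.congr fun l => ?_
    simp only [Function.comp_apply]
    rw [show a j - l = -(l - a j) by ring, div_neg]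
  have hrest : Tendsto (fun l => ∑ i ∈ univ.erase j, x i ^ 2 / (a i - l)) (𝓝[>] (a j))
      (𝓝 (∑ i ∈ univ.erase j, x i ^ 2 / (a i - a j))) := by
    apply Tendsto.mono_left _ nhdsWithin_le_nhds
    apply tendsto_finset_sum
    intro i hi
    have hne : a i - a j ≠ 0 := sub_ne_zero.2 fun e => (Finset.mem_erase.1 hi).1 (hainj e)
    exact tendsto_const_nhds.div
      (((continuous_const.sub continuous_id).tendsto (a j))) hne
  have hadd : Tendsto (fun l => x j ^ 2 / (a j - l) + ∑ i ∈ univ.erase j, x i ^ 2 / (a i - l))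
      (𝓝[>] (a j)) atBot := by
    apply tendsto_atBot_add_right_of_ge' _ ((∑ i ∈ univ.erase j, x i ^ 2 / (a i - a j)) + 1) hmain
    exact (hrest.eventually (eventually_lt_nhds (by linarith))).mono fun l h => le_of_lt h
  exact hadd.congr fun l => Finset.add_sum_erase _ _ (mem_univ j)

/-- `F → 0` as `l → -∞`. -/
private lemma F_atBot {m : ℕ} (a x : Fin m → ℝ) :
    Tendsto (fun l => ∑ i, x i ^ 2 / (a i - l)) atBot (𝓝 0) := by
  have h : ∀ i : Fin m, Tendsto (fun l => x i ^ 2 / (a i - l)) atBot (𝓝 0) := by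
    intro i
    have h1 : Tendsto (fun l : ℝ => a i - l) atBot atTop :=
      (tendsto_atTop_add_const_left atBot (a i) tendsto_neg_atBot_atTop).congr
        (fun l => (sub_eq_add_neg _ _).symm)
    have h2 := (tendsto_inv_atTop_zero.comp h1).const_mul (x i ^ 2)
    simpa [div_eq_mul_inv] using h2
  simpa using tendsto_finset_sum univ fun i _ => h i

/-- Through a point of `ℝ^m` with all coordinates nonzero pass exactly `m` of the
confocal quadrics `E_λ`, with parameters interlacing the `a_i`. -/
theorem stmt4 (m : ℕ) (hm : 0 < m) (a : Fin m → ℝ) (ha : StrictMono a)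
    (x : Fin m → ℝ) (hx : ∀ i, x i ≠ 0) :
    (setOf fun l : ℝ => (∀ i, l ≠ a i) ∧ ∑ i, x i ^ 2 / (a i - l) = 1).Finite ∧
    (setOf fun l : ℝ => (∀ i, l ≠ a i) ∧ ∑ i, x i ^ 2 / (a i - l) = 1).ncard = m ∧
    (∃! l : ℝ, ((∀ i, l ≠ a i) ∧ ∑ i, x i ^ 2 / (a i - l) = 1) ∧ l < a ⟨0, hm⟩) ∧
    (∀ i : Fin m, ∀ h : (i : ℕ) + 1 < m,
      ∃! l : ℝ, ((∀ j, l ≠ a j) ∧ ∑ j, x j ^ 2 / (a j - l) = 1) ∧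
        a i < l ∧ l < a ⟨(i : ℕ) + 1, h⟩) ∧
    (∀ l : ℝ, ((∀ i, l ≠ a i) ∧ ∑ i, x i ^ 2 / (a i - l) = 1) →
      ¬ a ⟨m - 1, Nat.sub_lt hm Nat.one_pos⟩ < l) := by
  have hainj : Function.Injective a := ha.injective
  set F : ℝ → ℝ := fun l => ∑ i, x i ^ 2 / (a i - l) with hF
  set P : ℝ → Prop := fun l => (∀ i, l ≠ a i) ∧ F l = 1 with hP
  -- l below a 0 misses all a i
  have hlow_ne : ∀ l : ℝ, l < a ⟨0, hm⟩ → ∀ i, l ≠ a i := by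
    intro l hl i e
    have : a ⟨0, hm⟩ ≤ a i := ha.monotone (by rw [Fin.le_def]; exact Nat.zero_le _)
    exact absurd (e ▸ hl) (not_lt.2 this)
  -- l in a gap misses all a i
  have hgap_ne : ∀ (i : Fin m) (h : (i : ℕ) + 1 < m) (l : ℝ),
      a i < l → l < a ⟨(i : ℕ) + 1, h⟩ → ∀ j, l ≠ a j := by
    intro i h l h1 h2 j e
    subst e
    have c1 : (i : ℕ) < (j : ℕ) := Fin.lt_def.1 (ha.lt_iff_lt.1 h1)
    have c2 : (j : ℕ) < (i : ℕ) + 1 := Fin.lt_def.1 (ha.lt_iff_lt.1 h2)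
    omega
  -- existence and uniqueness below a 0
  have H0 : ∃! l : ℝ, P l ∧ l < a ⟨0, hm⟩ := by
    have hmono : StrictMonoOn F (Iio (a ⟨0, hm⟩)) := by
      apply F_smono hm a x hx
      intro j l hl μ hμ hlμ
      have h1 : a ⟨0, hm⟩ ≤ a j := ha.monotone (by rw [Fin.le_def]; exact Nat.zero_le _)
      rw [Set.mem_Iio] at hl hμ
      exact mul_pos (by linarith) (by linarith)
    -- find u with F u < 1
    have hu : ∃ u, F u < 1 ∧ u < a ⟨0, hm⟩ := by
      have h1 : ∀ᶠ u in atBot, F u < 1 := (F_atBot a x).eventually (eventually_lt_nhds one_pos)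
      have h2 : ∀ᶠ u in (atBot : Filter ℝ), u < a ⟨0, hm⟩ := Iio_mem_atBot _
      exact (h1.and h2).exists
    obtain ⟨u, hu1, hu2⟩ := hu
    have hv : ∃ v, 1 < F v ∧ v ∈ Ioo u (a ⟨0, hm⟩) := by
      have h1 : ∀ᶠ v in 𝓝[<] (a ⟨0, hm⟩), 1 < F v :=
        (F_top a x hainj ⟨0, hm⟩ (hx _)).eventually (eventually_gt_atTop 1)
      have h2 : Ioo u (a ⟨0, hm⟩) ∈ 𝓝[<] (a ⟨0, hm⟩) := Ioo_mem_nhdsLT hu2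
      exact (h1.and h2).exists
    obtain ⟨v, hv1, hv2, hv3⟩ := hv
    have hIcc : Icc u v ⊆ Iio (a ⟨0, hm⟩) := fun l hl => lt_of_le_of_lt hl.2 hv3
    have hroot : ∃ l ∈ Icc u v, F l = 1 := by
      have hcont : ContinuousOn F (Icc u v) :=
        F_cont a x (s := Icc u v) (fun l hl i => hlow_ne l (hIcc hl) i)
      exact intermediate_value_Icc (le_of_lt hv2) hcont ⟨le_of_lt hu1, le_of_lt hv1⟩
    obtain ⟨l, hl, hFl⟩ := hroot
    have hlmem : l < a ⟨0, hm⟩ := hIcc hl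
    refine ⟨l, ⟨⟨hlow_ne l hlmem, hFl⟩, hlmem⟩, ?_⟩
    rintro l' ⟨⟨_, hFl'⟩, hl'⟩
    exact hmono.injOn hl' hlmem (by rw [hFl', hFl])
  -- existence and uniqueness in each gap
  have Hgap : ∀ (i : Fin m) (h : (i : ℕ) + 1 < m),
      ∃! l : ℝ, P l ∧ a i < l ∧ l < a ⟨(i : ℕ) + 1, h⟩ := by
    intro i h
    set b := a ⟨(i : ℕ) + 1, h⟩ with hb
    have hab : a i < b := ha (by simp [Fin.lt_def])
    have hmono : StrictMonoOn F (Ioo (a i) b) := by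
      apply F_smono hm a x hx
      intro j l hl μ hμ hlμ
      rw [Set.mem_Ioo] at hl hμ
      rcases le_or_gt (j : ℕ) (i : ℕ) with hj | hj
      · have h1 : a j ≤ a i := ha.monotone (by simp [Fin.le_def, hj])
        exact mul_pos_of_neg_of_neg (by linarith) (by linarith)
      · have h1 : b ≤ a j := ha.monotone (by simp [Fin.le_def]; omega)
        exact mul_pos (by linarith) (by linarith)
    have hu : ∃ u, F u < 1 ∧ u ∈ Ioo (a i) b := by
      have h1 : ∀ᶠ u in 𝓝[>] (a i), F u < 1 :=
        (F_bot a x hainj i (hx i)).eventually (eventually_lt_atBot 1)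
      have h2 : Ioo (a i) b ∈ 𝓝[>] (a i) := Ioo_mem_nhdsGT hab
      exact (h1.and h2).exists
    obtain ⟨u, hu1, hu2, hu3⟩ := hu
    have hv : ∃ v, 1 < F v ∧ v ∈ Ioo u b := by
      have h1 : ∀ᶠ v in 𝓝[<] b, 1 < F v :=
        (F_top a x hainj ⟨(i : ℕ) + 1, h⟩ (hx _)).eventually (eventually_gt_atTop 1)
      have h2 : Ioo u b ∈ 𝓝[<] b := Ioo_mem_nhdsLT hu3
      exact (h1.and h2).exists
    obtain ⟨v, hv1, hv2, hv3⟩ := hv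
    have hIcc : Icc u v ⊆ Ioo (a i) b :=
      fun l hl => ⟨lt_of_lt_of_le hu2 hl.1, lt_of_le_of_lt hl.2 hv3⟩
    have hroot : ∃ l ∈ Icc u v, F l = 1 := by
      have hcont : ContinuousOn F (Icc u v) :=
        F_cont a x (s := Icc u v) (fun l hl j => hgap_ne i h l (hIcc hl).1 (hIcc hl).2 j)
      exact intermediate_value_Icc (le_of_lt hv2) hcont ⟨le_of_lt hu1, le_of_lt hv1⟩
    obtain ⟨l, hl, hFl⟩ := hroot
    have hlmem : l ∈ Ioo (a i) b := hIcc hl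
    refine ⟨l, ⟨⟨hgap_ne i h l hlmem.1 hlmem.2, hFl⟩, hlmem.1, hlmem.2⟩, ?_⟩
    rintro l' ⟨⟨_, hFl'⟩, hl'1, hl'2⟩
    exact hmono.injOn ⟨hl'1, hl'2⟩ hlmem (by rw [hFl', hFl])
  -- no solution above the last a
  have Hhigh : ∀ l : ℝ, P l → ¬ a ⟨m - 1, Nat.sub_lt hm Nat.one_pos⟩ < l := by
    intro l ⟨hne, hFl⟩ hlt
    have hneg : ∀ i : Fin m, x i ^ 2 / (a i - l) < 0 := by
      intro i
      have h1 : a i ≤ a ⟨m - 1, Nat.sub_lt hm Nat.one_pos⟩ := by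
        apply ha.monotone
        simp only [Fin.le_def]
        have := i.isLt
        omega
      have hx2 : (0:ℝ) < x i ^ 2 := by have := hx i; positivity
      exact div_neg_of_pos_of_neg hx2 (by linarith)
    have : Nonempty (Fin m) := ⟨⟨0, hm⟩⟩
    have hsum : F l < 0 := Finset.sum_neg (fun i _ => hneg i) univ_nonempty
    rw [hFl] at hsum
    linarith
  -- classification of elements of S
  have hclass : ∀ l : ℝ, P l →
      l < a ⟨0, hm⟩ ∨ (∃ (i : Fin m) (h : (i : ℕ) + 1 < m), a i < l ∧ l < a ⟨(i : ℕ) + 1, h⟩) := by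
    intro l hPl
    by_cases h0 : l < a ⟨0, hm⟩
    · exact Or.inl h0
    right
    have h0' : a ⟨0, hm⟩ < l := lt_of_le_of_ne (not_lt.1 h0) (fun e => hPl.1 ⟨0, hm⟩ e.symm)
    have hlast : l < a ⟨m - 1, Nat.sub_lt hm Nat.one_pos⟩ := by
      rcases lt_trichotomy l (a ⟨m - 1, Nat.sub_lt hm Nat.one_pos⟩) with h | h | h
      · exact h
      · exact absurd h (hPl.1 _)
      · exact absurd h (Hhigh l hPl)
    set T : Finset (Fin m) := univ.filter (fun i => a i < l) with hT
    have hTne : T.Nonempty := ⟨⟨0, hm⟩, by simp [hT, h0']⟩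
    set i : Fin m := T.max' hTne with hi
    have hil : a i < l := by
      have := T.max'_mem hTne
      simp [hT] at this
      exact this
    have hibound : (i : ℕ) + 1 < m := by
      have hne' : (i : ℕ) ≠ m - 1 := by
        intro e
        have : i = ⟨m - 1, Nat.sub_lt hm Nat.one_pos⟩ := Fin.ext e
        rw [this] at hil
        linarith
      have := i.isLt
      omega
    refine ⟨i, hibound, hil, ?_⟩
    have hnotmem : (⟨(i : ℕ) + 1, hibound⟩ : Fin m) ∉ T := by
      intro hmem
      have := T.le_max' _ hmem
      rw [← hi] at this
      simp [Fin.le_def] at this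
    have : ¬ a ⟨(i : ℕ) + 1, hibound⟩ < l := by
      intro hc
      exact hnotmem (by simp [hT, hc])
    exact lt_of_le_of_ne (not_lt.1 this) (hPl.1 _)
  -- define the map picking the roots
  have hsub1 : ∀ k : Fin m, (k : ℕ) ≠ 0 → (k : ℕ) - 1 < m := by
    intro k hk; have := k.isLt; omega
  have hsub2 : ∀ k : Fin m, (hk : (k : ℕ) ≠ 0) → ((⟨(k : ℕ) - 1, hsub1 k hk⟩ : Fin m) : ℕ) + 1 < m := by
    intro k hk; have := k.isLt; simp; omega
  set r : Fin m → ℝ := fun k =>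
    if hk : (k : ℕ) = 0 then H0.choose else (Hgap ⟨(k : ℕ) - 1, hsub1 k hk⟩ (hsub2 k hk)).choose
    with hr
  have hr0 : P (r ⟨0, hm⟩) ∧ r ⟨0, hm⟩ < a ⟨0, hm⟩ := by
    simp only [hr, dif_pos]
    exact H0.choose_spec.1
  have hrk : ∀ k : Fin m, (hk : (k : ℕ) ≠ 0) →
      P (r k) ∧ a ⟨(k : ℕ) - 1, hsub1 k hk⟩ < r k ∧ r k < a k := by
    intro k hk
    have hspec := (Hgap ⟨(k : ℕ) - 1, hsub1 k hk⟩ (hsub2 k hk)).choose_spec.1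
    have hke : (⟨((⟨(k : ℕ) - 1, hsub1 k hk⟩ : Fin m) : ℕ) + 1, hsub2 k hk⟩ : Fin m) = k := by
      apply Fin.ext; simp; omega
    have hrke : r k = (Hgap ⟨(k : ℕ) - 1, hsub1 k hk⟩ (hsub2 k hk)).choose := by
      simp only [hr]; rw [dif_neg hk]
    rw [hrke]
    refine ⟨hspec.1, hspec.2.1, ?_⟩
    exact lt_of_lt_of_le hspec.2.2 (le_of_eq (congrArg a hke))
  have hrP : ∀ k : Fin m, P (r k) := by
    intro k
    by_cases hk : (k : ℕ) = 0
    · have : k = ⟨0, hm⟩ := Fin.ext hk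
      rw [this]; exact hr0.1
    · exact (hrk k hk).1
  have hr_lt : ∀ k : Fin m, r k < a k := by
    intro k
    by_cases hk : (k : ℕ) = 0
    · have : k = ⟨0, hm⟩ := Fin.ext hk
      rw [this]; exact hr0.2
    · exact (hrk k hk).2.2
  have hrmono : StrictMono r := by
    intro k k' hkk'
    have hk' : (k' : ℕ) ≠ 0 := by
      have : (k : ℕ) < (k' : ℕ) := hkk'
      omega
    have h1 : a ⟨(k' : ℕ) - 1, hsub1 k' hk'⟩ < r k' := (hrk k' hk').2.1
    have h2 : a k ≤ a ⟨(k' : ℕ) - 1, hsub1 k' hk'⟩ := by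
      apply ha.monotone
      simp only [Fin.le_def]
      have : (k : ℕ) < (k' : ℕ) := hkk'
      omega
    exact lt_trans (lt_of_lt_of_le (hr_lt k) h2) h1
  -- S = range r
  have hSeq : (setOf fun l : ℝ => (∀ i, l ≠ a i) ∧ ∑ i, x i ^ 2 / (a i - l) = 1) = Set.range r := by
    ext l
    simp only [mem_setOf_eq, Set.mem_range]
    constructor
    · intro hPl
      rcases hclass l hPl with h | ⟨i, h, h1, h2⟩
      · exact ⟨⟨0, hm⟩, H0.unique hr0 ⟨hPl, h⟩⟩
      · have hk : ((⟨(i : ℕ) + 1, h⟩ : Fin m) : ℕ) ≠ 0 := by simp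
        refine ⟨⟨(i : ℕ) + 1, h⟩, ?_⟩
        have hspec := hrk ⟨(i : ℕ) + 1, h⟩ hk
        have hie : a (⟨((⟨(i : ℕ) + 1, h⟩ : Fin m) : ℕ) - 1, hsub1 _ hk⟩ : Fin m) = a i := by
          apply congrArg a; apply Fin.ext; simp
        exact (Hgap i h).unique
          ⟨hspec.1, lt_of_le_of_lt (le_of_eq hie.symm) hspec.2.1, hspec.2.2⟩ ⟨hPl, h1, h2⟩
    · rintro ⟨k, rfl⟩
      exact hrP k
  refine ⟨?_, ?_, ?_, ?_, ?_⟩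
  · rw [hSeq]; exact Set.finite_range r
  · rw [hSeq, ← Set.image_univ, Set.ncard_image_of_injective _ hrmono.injective,
      Set.ncard_univ]
    simp
  · exact H0
  · exact Hgap
  · exact Hhigh
end

section
/- Let λ ≠ μ be real numbers, neither equal to any a_i. If ∑_{i=1}^m x_i²/(a_i−λ) = 1 and ∑_{i=1}^m x_i²/(a_i−μ) = 1, then ∑_{i=1}^m x_i²/((a_i−λ)(a_i−μ)) = 0; that is, the normal vectors (x_i/(a_i−λ))_{i=1}^m and (x_i/(a_i−μ))_{i=1}^m of the two confocal quadrics through x are orthogonal. (Confocal quadrics through a common point intersect perpendicularly there.) -/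
open Finset

/-- Confocal quadrics through a common point intersect perpendicularly there. -/
theorem stmt5 (m : ℕ) (hm : 0 < m) (a : Fin m → ℝ) (ha : Function.Injective a)
    (x : Fin m → ℝ) (lam mu : ℝ) (hne : lam ≠ mu)
    (hlam : ∀ i, lam ≠ a i) (hmu : ∀ i, mu ≠ a i)
    (h1 : ∑ i, x i ^ 2 / (a i - lam) = 1) (h2 : ∑ i, x i ^ 2 / (a i - mu) = 1) :
    ∑ i, x i ^ 2 / ((a i - lam) * (a i - mu)) = 0 := by
  have key : (lam - mu) * ∑ i, x i ^ 2 / ((a i - lam) * (a i - mu)) = 0 := by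
    rw [Finset.mul_sum]
    have h : ∀ i, (lam - mu) * (x i ^ 2 / ((a i - lam) * (a i - mu)))
        = x i ^ 2 / (a i - lam) - x i ^ 2 / (a i - mu) := by
      intro i
      have ha1 : a i - lam ≠ 0 := sub_ne_zero.2 fun h => hlam i h.symm
      have ha2 : a i - mu ≠ 0 := sub_ne_zero.2 fun h => hmu i h.symm
      field_simp
      ring
    simp_rw [h, Finset.sum_sub_distrib, h1, h2, sub_self]
  exact (mul_eq_zero.1 key).resolve_left (sub_ne_zero.2 hne)
end

section
/- Let λ ≠ μ be real numbers, neither equal to any a_k, and let t_λ, t_μ ∈ ℝ satisfy the tangency conditions: −1 + ∑_{k=1}^m (y_k + t_λ x_k)²/(a_k−λ) = 0 and ∑_{k=1}^m x_k (y_k + t_λ x_k)/(a_k−λ) = 0, and likewise −1 + ∑_{k=1}^m (y_k + t_μ x_k)²/(a_k−μ) = 0 and ∑_{k=1}^m x_k (y_k + t_μ x_k)/(a_k−μ) = 0. Then ∑_{k=1}^m (y_k + t_λ x_k)(y_k + t_μ x_k)/((a_k−λ)(a_k−μ)) = 0. (The tangent hyperplanes of the two confocal quadrics tangent to the line ℓ_{x,y},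 taken at the respective points of tangency, are perpendicular.) -/
open Finset

/-- The tangent hyperplanes of two confocal quadrics tangent to a common line,
taken at the respective points of tangency, are perpendicular. -/
theorem stmt6 (m : ℕ) (hm : 0 < m) (a : Fin m → ℝ) (ha : Function.Injective a)
    (x y : Fin m → ℝ) (lam mu : ℝ) (hne : lam ≠ mu)
    (hlam : ∀ k, lam ≠ a k) (hmu : ∀ k, mu ≠ a k) (tlam tmu : ℝ)
    (h1 : -1 + ∑ k, (y k + tlam * x k) ^ 2 / (a k - lam) = 0)
    (h2 : ∑ k, x k * (y k + tlam * x k) / (a k - lam) = 0)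
    (h3 : -1 + ∑ k, (y k + tmu * x k) ^ 2 / (a k - mu) = 0)
    (h4 : ∑ k, x k * (y k + tmu * x k) / (a k - mu) = 0) :
    ∑ k, (y k + tlam * x k) * (y k + tmu * x k) / ((a k - lam) * (a k - mu)) = 0 := by
  have hal : ∀ k, a k - lam ≠ 0 := fun k => sub_ne_zero.mpr fun h => hlam k h.symm
  have ham : ∀ k, a k - mu ≠ 0 := fun k => sub_ne_zero.mpr fun h => hmu k h.symm
  have hid : ∀ k ∈ Finset.univ, (lam - mu) *
      ((y k + tlam * x k) * (y k + tmu * x k) / ((a k - lam) * (a k - mu))) =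
      (y k + tlam * x k) ^ 2 / (a k - lam) - (y k + tmu * x k) ^ 2 / (a k - mu)
      + (tmu - tlam) * (x k * (y k + tlam * x k) / (a k - lam))
      - (tlam - tmu) * (x k * (y k + tmu * x k) / (a k - mu)) := by
    intro k _
    field_simp [hal k, ham k]
    ring
  have key : (lam - mu) *
      (∑ k, (y k + tlam * x k) * (y k + tmu * x k) / ((a k - lam) * (a k - mu))) = 0 := by
    rw [Finset.mul_sum, Finset.sum_congr rfl hid]
    have e1 : ∑ k, (y k + tlam * x k) ^ 2 / (a k - lam) = 1 := by linarith
    have e3 : ∑ k, (y k + tmu * x k) ^ 2 / (a k - mu) = 1 := by linarith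
    simp only [Finset.sum_sub_distrib, Finset.sum_add_distrib, ← Finset.mul_sum,
      e1, e3, h2, h4]
    ring
  have := mul_eq_zero.mp key
  rcases this with h | h
  · exact absurd (sub_eq_zero.mp h) hne
  · exact h
end

section
/- In the polynomial ring ℂ[t], define f₁(t) := ∏_{k=1}^m (t−a_k), U(t) := ∑_{k=1}^m x_k² ∏_{ℓ≠k}(t−a_ℓ), W(t) := f₁(t) + ∑_{k=1}^m y_k² ∏_{ℓ≠k}(t−a_ℓ), V(t) := i·∑_{k=1}^m x_k y_k ∏_{ℓ≠k}(t−a_ℓ) (where i² = −1), and f₂(t) := ∑_{k=1}^m F_k(x,y) ∏_{ℓ≠k}(t−a_ℓ). Then V(t)² + U(t)·W(t) = f₁(t)·f₂(t) as polynomials in ℂ[t]. -/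
open Finset Polynomial

namespace Stmt7Aux

variable {m : ℕ}

noncomputable def e (a : Fin m → ℂ) (k : Fin m) : Polynomial ℂ :=
  ∏ l ∈ Finset.univ.erase k, (X - C (a l))

noncomputable def g (a : Fin m → ℂ) (k l : Fin m) : Polynomial ℂ :=
  ∏ j ∈ (Finset.univ.erase k).erase l, (X - C (a j))

lemma g_comm (a : Fin m → ℂ) (k l : Fin m) : g a k l = g a l k := by
  unfold g; rw [Finset.erase_right_comm]

lemma e_eq (a : Fin m → ℂ) {k l : Fin m} (h : k ≠ l) :
    e a k = (X - C (a l)) * g a k l :=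
  (Finset.mul_prod_erase _ _ (Finset.mem_erase.2 ⟨h.symm, Finset.mem_univ l⟩)).symm

lemma f1_eq (a : Fin m → ℂ) (k : Fin m) :
    (∏ j, (X - C (a j))) = (X - C (a k)) * e a k :=
  (Finset.mul_prod_erase _ _ (Finset.mem_univ k)).symm

lemma e_mul_e (a : Fin m → ℂ) {k l : Fin m} (h : k ≠ l) :
    e a k * e a l = (∏ j, (X - C (a j))) * g a k l := by
  rw [f1_eq a k, e_eq a h, e_eq a h.symm, g_comm a l k]; ring

lemma e_sub_e (a : Fin m → ℂ) {k l : Fin m} (h : k ≠ l) :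
    e a k - e a l = C (a k - a l) * g a k l := by
  rw [e_eq a h, e_eq a h.symm, g_comm a l k, map_sub]; ring

/-- generic index swap over off-diagonal double sums -/
lemma swap_sum (F : Fin m → Fin m → Polynomial ℂ) :
    (∑ k, ∑ j ∈ Finset.univ.erase k, F k j)
      = ∑ k, ∑ j ∈ Finset.univ.erase k, F j k :=
  Finset.sum_comm' (fun p q => by simp [Finset.mem_erase, ne_comm])

theorem stmt7' (m : ℕ) (a : Fin m → ℂ) (ha : Function.Injective a) (x y : Fin m → ℂ) :
    (C Complex.I * ∑ k, C (x k * y k) * e a k) ^ 2 +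
      (∑ k, C (x k ^ 2) * e a k) *
        ((∏ k, (X - C (a k))) + ∑ k, C (y k ^ 2) * e a k) =
      (∏ k, (X - C (a k))) *
        ∑ k, C (x k ^ 2 + ∑ l ∈ Finset.univ.erase k,
            (x k * y l - x l * y k) ^ 2 / (a k - a l)) * e a k := by
  have hane : ∀ {k l : Fin m}, k ≠ l → a k - a l ≠ 0 :=
    fun h => sub_ne_zero.2 fun he => h (ha he)
  set f : Polynomial ℂ := ∏ k, (X - C (a k)) with hf
  set S : Polynomial ℂ := ∑ k, C (x k * y k) * e a k with hS
  set U : Polynomial ℂ := ∑ k, C (x k ^ 2) * e a k with hU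
  set T : Polynomial ℂ := ∑ k, C (y k ^ 2) * e a k with hT
  -- Step A : expand LHS
  have hV : (C Complex.I * S) ^ 2 = -(S * S) := by
    rw [mul_pow, ← map_pow, Complex.I_sq, map_neg, map_one, neg_one_mul, sq]
  have hST : U * T - S * S = ∑ k, ∑ j,
      C (x k ^ 2 * y j ^ 2 - x k * y k * (x j * y j)) * (e a k * e a j) := by
    rw [hU, hT, hS, Finset.sum_mul_sum, Finset.sum_mul_sum, ← Finset.sum_sub_distrib]
    refine Finset.sum_congr rfl fun k _ => ?_
    rw [← Finset.sum_sub_distrib]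
    refine Finset.sum_congr rfl fun j _ => ?_
    simp only [map_sub, map_mul, map_pow]
    ring
  have hdiag : ∀ k : Fin m,
      (∑ j, C (x k ^ 2 * y j ^ 2 - x k * y k * (x j * y j)) * (e a k * e a j))
        = ∑ j ∈ Finset.univ.erase k,
            C (x k ^ 2 * y j ^ 2 - x k * y k * (x j * y j)) * (e a k * e a j) := by
    intro k
    rw [← Finset.add_sum_erase _ _ (Finset.mem_univ k),
      show x k ^ 2 * y k ^ 2 - x k * y k * (x k * y k) = 0 from by ring, map_zero,
      zero_mul, zero_add]
  have hA : (C Complex.I * S) ^ 2 + U * (f + T)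
      = f * U + ∑ k, ∑ j ∈ Finset.univ.erase k,
          C (x k ^ 2 * y j ^ 2 - x k * y k * (x j * y j)) * (e a k * e a j) := by
    calc (C Complex.I * S) ^ 2 + U * (f + T) = f * U + (U * T - S * S) := by rw [hV]; ring
      _ = _ := by
          rw [hST]
          exact congrArg (f * U + ·) (Finset.sum_congr rfl fun k _ => hdiag k)
  -- Step B : pull out f
  have hB : (∑ k, ∑ j ∈ Finset.univ.erase k,
        C (x k ^ 2 * y j ^ 2 - x k * y k * (x j * y j)) * (e a k * e a j))
      = f * ∑ k, ∑ j ∈ Finset.univ.erase k,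
          C (x k ^ 2 * y j ^ 2 - x k * y k * (x j * y j)) * g a k j := by
    rw [Finset.mul_sum]
    refine Finset.sum_congr rfl fun k _ => ?_
    rw [Finset.mul_sum]
    refine Finset.sum_congr rfl fun j hj => ?_
    rw [e_mul_e a ((Finset.mem_erase.1 hj).1.symm : k ≠ j), ← hf]
    ring
  -- Step C : expand RHS coefficient
  have hC : (∑ k, C (x k ^ 2 + ∑ l ∈ Finset.univ.erase k,
        (x k * y l - x l * y k) ^ 2 / (a k - a l)) * e a k)
      = U + ∑ k, ∑ l ∈ Finset.univ.erase k,
          C ((x k * y l - x l * y k) ^ 2 / (a k - a l)) * e a k := by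
    rw [hU, ← Finset.sum_add_distrib]
    refine Finset.sum_congr rfl fun k _ => ?_
    rw [map_add, add_mul, map_sum, Finset.sum_mul]
  -- Step D : the core identity
  have hD : (∑ k, ∑ j ∈ Finset.univ.erase k,
        C (x k ^ 2 * y j ^ 2 - x k * y k * (x j * y j)) * g a k j)
      = ∑ k, ∑ l ∈ Finset.univ.erase k,
          C ((x k * y l - x l * y k) ^ 2 / (a k - a l)) * e a k := by
    have h2 : (2 : Polynomial ℂ) ≠ 0 := two_ne_zero
    apply mul_left_cancel₀ h2
    have hL : 2 * (∑ k, ∑ j ∈ Finset.univ.erase k,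
          C (x k ^ 2 * y j ^ 2 - x k * y k * (x j * y j)) * g a k j)
        = ∑ k, ∑ j ∈ Finset.univ.erase k, C ((x k * y j - x j * y k) ^ 2) * g a k j := by
      rw [two_mul]
      nth_rewrite 2 [swap_sum (fun k j =>
        C (x k ^ 2 * y j ^ 2 - x k * y k * (x j * y j)) * g a k j)]
      rw [← Finset.sum_add_distrib]
      refine Finset.sum_congr rfl fun k _ => ?_
      rw [← Finset.sum_add_distrib]
      refine Finset.sum_congr rfl fun j hj => ?_
      rw [g_comm a j k, ← add_mul, ← map_add,
        show x k ^ 2 * y j ^ 2 - x k * y k * (x j * y j) +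
          (x j ^ 2 * y k ^ 2 - x j * y j * (x k * y k)) = (x k * y j - x j * y k) ^ 2 from by ring]
    have hR : 2 * (∑ k, ∑ l ∈ Finset.univ.erase k,
          C ((x k * y l - x l * y k) ^ 2 / (a k - a l)) * e a k)
        = ∑ k, ∑ j ∈ Finset.univ.erase k, C ((x k * y j - x j * y k) ^ 2) * g a k j := by
      rw [two_mul]
      nth_rewrite 2 [swap_sum (fun k l =>
        C ((x k * y l - x l * y k) ^ 2 / (a k - a l)) * e a k)]
      rw [← Finset.sum_add_distrib]
      refine Finset.sum_congr rfl fun k _ => ?_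
      rw [← Finset.sum_add_distrib]
      refine Finset.sum_congr rfl fun l hl => ?_
      have hkl : k ≠ l := (Finset.mem_erase.1 hl).1.symm
      calc C ((x k * y l - x l * y k) ^ 2 / (a k - a l)) * e a k +
            C ((x l * y k - x k * y l) ^ 2 / (a l - a k)) * e a l
          = C ((x k * y l - x l * y k) ^ 2 / (a k - a l)) * (e a k - e a l) := by
            rw [show (x l * y k - x k * y l) ^ 2 = (x k * y l - x l * y k) ^ 2 from by ring,
              show a l - a k = -(a k - a l) from by ring, div_neg, map_neg]
            ring
        _ = C ((x k * y l - x l * y k) ^ 2 / (a k - a l)) * (C (a k - a l) * g a k l) := by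
            rw [e_sub_e a hkl]
        _ = C ((x k * y l - x l * y k) ^ 2 / (a k - a l) * (a k - a l)) * g a k l := by
            rw [map_mul]; ring
        _ = C ((x k * y l - x l * y k) ^ 2) * g a k l := by
            rw [div_mul_cancel₀ _ (hane hkl)]
    rw [hL, hR]
  rw [hA, hB, hC, hD]
  ring
end Stmt7Aux

/-- The triple `(U, V, W)` associated to a point `(x, y)` of the ellipsoid system
satisfies the hyperelliptic equation `V² + U·W = f₁·f₂`. -/
theorem stmt7 (m : ℕ) (hm : 0 < m) (a : Fin m → ℂ) (ha : Function.Injective a)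
    (x y : Fin m → ℂ) :
    let f₁ : Polynomial ℂ := ∏ k, (X - C (a k))
    let U : Polynomial ℂ :=
      ∑ k, C (x k ^ 2) * ∏ l ∈ Finset.univ.erase k, (X - C (a l))
    let W : Polynomial ℂ :=
      f₁ + ∑ k, C (y k ^ 2) * ∏ l ∈ Finset.univ.erase k, (X - C (a l))
    let V : Polynomial ℂ :=
      C Complex.I * ∑ k, C (x k * y k) * ∏ l ∈ Finset.univ.erase k, (X - C (a l))
    let f₂ : Polynomial ℂ :=
      ∑ k, C (x k ^ 2 + ∑ l ∈ Finset.univ.erase k,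
          (x k * y l - x l * y k) ^ 2 / (a k - a l)) *
        ∏ l ∈ Finset.univ.erase k, (X - C (a l))
    V ^ 2 + U * W = f₁ * f₂ := by
  intro f₁ U W V f₂
  exact Stmt7Aux.stmt7' m a ha x y
end

section
/- Let d ≥ 1 and let V, U, W ∈ ℂ[x] be polynomials, each of degree at most d, such that f := V² + U·W is monic of degree 2d−1. Consider the traceless 2×2 matrix A(x) with rows (V, U) and (W, −V) over ℂ[x]. Then there exists a constant invertible matrix g ∈ GL₂(ℂ) such that g·A(x)·g⁻¹ has the form with rows (V', U') and (W', −V'), where W' is monic of degree d, U' is monic of degree d−1, and V' has degree at most d−2 (V' = 0 when d = 1). Moreover, the matrix with rows (V', U'), (W', −V') satisfying these normalization conditions is the unique such matrix in the GL₂(ℂ)-conjugacy orbit of A(x). -/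
/-!
The coefficient of `x^d` of `A = !![V, U; W, -V]` is a traceless constant matrix `N` with
`det N = -(coefficient of x^(2d) in f) = 0`, and `N ≠ 0` because `f` has degree exactly `2d - 1`;
so `N` is conjugate to `E₂₁ = !![0, 0; 1, 0]`. After that conjugation, comparing coefficients of
`x^(2d-1)` in `f = V² + UW` shows that `U` has coefficient `1` at `x^(d-1)`, and conjugating by
`!![1, 0; t, 1]`, which fixes `E₂₁`, clears the coefficient of `V` at `x^(d-1)`. For uniqueness,
a constant `g` conjugating one normal form into another must commute with `E₂₁` and intertwine the
coefficient matrices `!![0, 1; w, 0]`, `!![0, 1; w', 0]` at `x^(d-1)`; this forces `g` to be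
scalar, so the conjugation is trivial.
-/

open Polynomial Matrix

section

variable {n R : Type*} [Fintype n] [CommRing R]

lemma map_coeff_map_C_mul (g : Matrix n n R) (A : Matrix n n R[X]) (k : ℕ) :
    (g.map C * A).map (fun p => p.coeff k) = g * A.map (fun p => p.coeff k) := by
  ext i j
  simp only [map_apply, mul_apply, finsetSum_coeff, coeff_C_mul]

lemma map_coeff_mul_map_C (A : Matrix n n R[X]) (g : Matrix n n R) (k : ℕ) :
    (A * g.map C).map (fun p => p.coeff k) = A.map (fun p => p.coeff k) * g := by
  ext i j
  simp only [map_apply, mul_apply, finsetSum_coeff, coeff_mul_C]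

variable [DecidableEq n]

def ConstConj (A B : Matrix n n R[X]) : Prop :=
  ∃ g : GL n R, (g : Matrix n n R).map C * A * ((g⁻¹ : GL n R) : Matrix n n R).map C = B

lemma map_C_coe_mul_map_C_coe_inv (g : GL n R) :
    (g : Matrix n n R).map C * ((g⁻¹ : GL n R) : Matrix n n R).map C = 1 := by
  rw [← Matrix.map_mul, Units.mul_inv, Matrix.map_one _ (map_zero C) (map_one C)]

lemma map_C_coe_inv_mul_map_C_coe (g : GL n R) :
    ((g⁻¹ : GL n R) : Matrix n n R).map C * (g : Matrix n n R).map C = 1 := by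
  simpa only [inv_inv] using map_C_coe_mul_map_C_coe_inv g⁻¹

lemma ConstConj.symm {A B : Matrix n n R[X]} (h : ConstConj A B) : ConstConj B A := by
  obtain ⟨g, rfl⟩ := h
  refine ⟨g⁻¹, ?_⟩
  simp only [inv_inv, ← mul_assoc, map_C_coe_inv_mul_map_C_coe, one_mul]
  simp only [mul_assoc, map_C_coe_inv_mul_map_C_coe, mul_one]

lemma ConstConj.trans {A B D : Matrix n n R[X]} (hAB : ConstConj A B) (hBD : ConstConj B D) :
    ConstConj A D := by
  obtain ⟨g, rfl⟩ := hAB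
  obtain ⟨h, rfl⟩ := hBD
  refine ⟨h * g, ?_⟩
  simp only [_root_.mul_inv_rev, Units.val_mul, Matrix.map_mul, mul_assoc]

lemma ConstConj.det_eq {A B : Matrix n n R[X]} (h : ConstConj A B) : B.det = A.det := by
  obtain ⟨g, rfl⟩ := h
  rw [det_mul, det_mul, mul_right_comm, ← det_mul, map_C_coe_mul_map_C_coe_inv, det_one, one_mul]

lemma ConstConj.trace_eq {A B : Matrix n n R[X]} (h : ConstConj A B) : B.trace = A.trace := by
  obtain ⟨g, rfl⟩ := h
  rw [trace_mul_cycle, map_C_coe_inv_mul_map_C_coe, one_mul]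

lemma coe_mul_map_coeff_eq_of_conj {g : GL n R} {A B : Matrix n n R[X]}
    (h : (g : Matrix n n R).map C * A * ((g⁻¹ : GL n R) : Matrix n n R).map C = B) (k : ℕ) :
    (g : Matrix n n R) * A.map (fun p => p.coeff k) = B.map (fun p => p.coeff k) * g := by
  rw [← map_coeff_map_C_mul, ← map_coeff_mul_map_C, ← h, mul_assoc, map_C_coe_inv_mul_map_C_coe,
    mul_one]

end

lemma matrix_fin_two_eq_iff {α : Type*} {a b c e a' b' c' e' : α} :
    !![a, b; c, e] = !![a', b'; c', e'] ↔ a = a' ∧ b = b' ∧ c = c' ∧ e = e' := by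
  simp [and_assoc]

section

variable {R : Type*} [CommRing R]

lemma eq_traceless_of_trace_eq_zero {A : Matrix (Fin 2) (Fin 2) R} (h : A.trace = 0) :
    A = !![A 0 0, A 0 1; A 1 0, -A 0 0] := by
  rw [trace_fin_two, add_eq_zero_iff_eq_neg'] at h
  rw [← h]
  exact A.eta_fin_two

lemma map_coeff_traceless (V U W : R[X]) (k : ℕ) :
    (!![V, U; W, -V]).map (fun p => p.coeff k) =
      !![V.coeff k, U.coeff k; W.coeff k, -V.coeff k] := by
  ext i j
  fin_cases i <;> fin_cases j <;> simp

lemma traceless_eq_zero_iff {v u w : R} : !![v, u; w, -v] = 0 ↔ v = 0 ∧ u = 0 ∧ w = 0 := by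
  rw [(0 : Matrix (Fin 2) (Fin 2) R).eta_fin_two]
  simp +contextual [and_assoc]

lemma coeff_sq_add_mul_two_mul {d : ℕ} {V U W : R[X]}
    (hV : V.natDegree ≤ d) (hU : U.natDegree ≤ d) (hW : W.natDegree ≤ d) :
    (V ^ 2 + U * W).coeff (2 * d) = V.coeff d * V.coeff d + U.coeff d * W.coeff d := by
  rw [two_mul, coeff_add, sq, coeff_mul_add_eq_of_natDegree_le hV hV,
    coeff_mul_add_eq_of_natDegree_le hU hW]

lemma coeff_sq_add_mul_two_mul_sub_one {d : ℕ} (hd : 0 < d) {V U W : R[X]}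
    (hV : V.natDegree ≤ d - 1) (hU : U.natDegree ≤ d - 1) (hW : W.natDegree ≤ d) :
    (V ^ 2 + U * W).coeff (2 * d - 1) = U.coeff (d - 1) * W.coeff d := by
  have hV2 : (V ^ 2).coeff (2 * d - 1) = 0 :=
    coeff_eq_zero_of_natDegree_lt (natDegree_pow_le.trans_lt (by omega))
  rw [coeff_add, hV2, zero_add, show 2 * d - 1 = d - 1 + d by omega,
    coeff_mul_add_eq_of_natDegree_le hU hW]

def IsNormalForm (d : ℕ) (V U W : R[X]) : Prop :=
  W.Monic ∧ W.natDegree = d ∧ U.Monic ∧ U.natDegree = d - 1 ∧ V.degree < ((d - 1 : ℕ) : WithBot ℕ)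

lemma isNormalForm_iff [Nontrivial R] {d : ℕ} (hd : 0 < d) {V U W : R[X]} :
    IsNormalForm d V U W ↔ (V.natDegree ≤ d ∧ U.natDegree ≤ d ∧ W.natDegree ≤ d) ∧
      (V.coeff d = 0 ∧ U.coeff d = 0 ∧ W.coeff d = 1) ∧
      (V.coeff (d - 1) = 0 ∧ U.coeff (d - 1) = 1) := by
  constructor
  · rintro ⟨hW, hWd, hU, hUd, hV⟩
    have hV' := (degree_lt_iff_coeff_zero V (d - 1)).mp hV
    refine ⟨⟨natDegree_le_iff_coeff_eq_zero.mpr fun k hk => hV' k (by omega), by omega, hWd.le⟩,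
      ⟨hV' d (by omega), coeff_eq_zero_of_natDegree_lt (by omega), hWd ▸ hW.coeff_natDegree⟩,
      hV' (d - 1) le_rfl, hUd ▸ hU.coeff_natDegree⟩
  · rintro ⟨⟨hV, hU, hW⟩, ⟨hVd, hUd, hWd⟩, hVd', hUd'⟩
    have hU' := natDegree_le_pred hU hUd
    refine ⟨monic_of_natDegree_le_of_coeff_eq_one d hW hWd,
      natDegree_eq_of_le_of_coeff_ne_zero hW (by simp [hWd]),
      monic_of_natDegree_le_of_coeff_eq_one _ hU' hUd',
      natDegree_eq_of_le_of_coeff_ne_zero hU' (by simp [hUd']), ?_⟩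
    refine (degree_lt_iff_coeff_zero V (d - 1)).mpr fun k hk => ?_
    obtain rfl | rfl | hk := (show k = d - 1 ∨ k = d ∨ d < k by omega)
    · exact hVd'
    · exact hVd
    · exact coeff_eq_zero_of_natDegree_lt (hV.trans_lt hk)

end

section

variable {K : Type*} [Field K]

lemma exists_conj_eq_E21 {v u w : K} (hdet : v * v + u * w = 0) (hne : u ≠ 0 ∨ w ≠ 0) :
    ∃ g : GL (Fin 2) K, (g : Matrix (Fin 2) (Fin 2) K) * !![v, u; w, -v] =
      !![0, 0; 1, 0] * (g : Matrix (Fin 2) (Fin 2) K) := by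
  by_cases hw : w = 0
  · have hv : v = 0 := by simpa [hw] using hdet
    have hu : u ≠ 0 := hne.resolve_right (not_not.mpr hw)
    refine ⟨.mkOfDetNeZero !![0, 1; u⁻¹, 0] (by simpa using hu), ?_⟩
    simp [hv, hw, hu]
  · obtain rfl : u = -(v * v) / w := by field_simp; linear_combination hdet
    refine ⟨.mkOfDetNeZero !![1, -(v / w); 0, w⁻¹] (by simpa using hw), ?_⟩
    ext i j
    fin_cases i <;> fin_cases j <;> simp <;> field_simp <;> ring

lemma exists_conj_fix_E21_clear_diag (t w : K) : ∃ g : GL (Fin 2) K,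
    (g : Matrix (Fin 2) (Fin 2) K) * !![0, 0; 1, 0] =
        !![0, 0; 1, 0] * (g : Matrix (Fin 2) (Fin 2) K) ∧
      (g : Matrix (Fin 2) (Fin 2) K) * !![t, 1; w, -t] =
        !![0, 1; w + t ^ 2, 0] * (g : Matrix (Fin 2) (Fin 2) K) := by
  refine ⟨.mkOfDetNeZero !![1, 0; t, 1] (by simp), ?_, ?_⟩ <;>
  · ext i j
    fin_cases i <;> fin_cases j <;> simp <;> ring

lemma exists_eq_scalar_of_conj_E21 {g : Matrix (Fin 2) (Fin 2) K} {w w' : K}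
    (h₀ : g * !![0, 0; 1, 0] = !![0, 0; 1, 0] * g) (h₁ : g * !![0, 1; w, 0] = !![0, 1; w', 0] * g) :
    ∃ a, g = scalar (Fin 2) a := by
  obtain ⟨a, b, c, e, rfl⟩ : ∃ a b c e, g = !![a, b; c, e] := ⟨_, _, _, _, g.eta_fin_two⟩
  simp only [mul_fin_two, matrix_fin_two_eq_iff, mul_zero, mul_one, zero_mul, one_mul, add_zero,
    zero_add] at h₀ h₁
  obtain ⟨hb, -, hea, -⟩ := h₀
  obtain ⟨hc, -⟩ := h₁
  refine ⟨a, ?_⟩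
  ext i j
  fin_cases i <;> fin_cases j <;> simp [hb, ← hc, hea]

lemma exists_constConj_traceless (g : GL (Fin 2) K) {d : ℕ} {V U W : K[X]}
    (hV : V.natDegree ≤ d) (hU : U.natDegree ≤ d) (hW : W.natDegree ≤ d) :
    ∃ V' U' W' : K[X], ConstConj !![V, U; W, -V] !![V', U'; W', -V'] ∧
      V' ^ 2 + U' * W' = V ^ 2 + U * W ∧
      V'.natDegree ≤ d ∧ U'.natDegree ≤ d ∧ W'.natDegree ≤ d ∧
      ∀ k, (g : Matrix (Fin 2) (Fin 2) K) * !![V.coeff k, U.coeff k; W.coeff k, -V.coeff k] =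
        !![V'.coeff k, U'.coeff k; W'.coeff k, -V'.coeff k] * g := by
  set A : Matrix (Fin 2) (Fin 2) K[X] := !![V, U; W, -V]
  set B := (g : Matrix (Fin 2) (Fin 2) K).map C * A * ((g⁻¹ : GL (Fin 2) K) : Matrix _ _ K).map C
  have hAB : ConstConj A B := ⟨g, rfl⟩
  have hB : B = !![B 0 0, B 0 1; B 1 0, -B 0 0] :=
    eq_traceless_of_trace_eq_zero (by rw [hAB.trace_eq]; simp [A, trace_fin_two])
  have hcoeff (k : ℕ) :
      (g : Matrix (Fin 2) (Fin 2) K) * !![V.coeff k, U.coeff k; W.coeff k, -V.coeff k] =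
      !![(B 0 0).coeff k, (B 0 1).coeff k; (B 1 0).coeff k, -(B 0 0).coeff k] * g := by
    have := coe_mul_map_coeff_eq_of_conj (A := A) (B := B) rfl k
    rwa [hB, map_coeff_traceless, map_coeff_traceless] at this
  have hdeg (k : ℕ) (hk : d < k) :
      (B 0 0).coeff k = 0 ∧ (B 0 1).coeff k = 0 ∧ (B 1 0).coeff k = 0 := by
    rw [← traceless_eq_zero_iff, ← Units.mul_left_eq_zero g, ← hcoeff,
      coeff_eq_zero_of_natDegree_lt (hV.trans_lt hk),
      coeff_eq_zero_of_natDegree_lt (hU.trans_lt hk),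
      coeff_eq_zero_of_natDegree_lt (hW.trans_lt hk),
      traceless_eq_zero_iff.mpr ⟨rfl, rfl, rfl⟩, mul_zero]
  refine ⟨B 0 0, B 0 1, B 1 0, hB ▸ hAB, ?_, ?_, ?_, ?_, hcoeff⟩
  · have := hAB.det_eq
    rw [hB] at this
    simp only [A, det_fin_two_of] at this
    linear_combination -this
  all_goals exact natDegree_le_iff_coeff_eq_zero.mpr fun k hk => by simp [hdeg k hk]

lemma exists_constConj_coeff_E21 {d : ℕ} (hd : 0 < d) {V U W : K[X]}
    (hV : V.natDegree ≤ d) (hU : U.natDegree ≤ d) (hW : W.natDegree ≤ d)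
    (h2d : (V ^ 2 + U * W).coeff (2 * d) = 0) (h2d1 : (V ^ 2 + U * W).coeff (2 * d - 1) = 1) :
    ∃ V₁ U₁ W₁ : K[X], ConstConj !![V, U; W, -V] !![V₁, U₁; W₁, -V₁] ∧
      V₁ ^ 2 + U₁ * W₁ = V ^ 2 + U * W ∧
      (V₁.natDegree ≤ d ∧ U₁.natDegree ≤ d ∧ W₁.natDegree ≤ d) ∧
      V₁.coeff d = 0 ∧ U₁.coeff d = 0 ∧ W₁.coeff d = 1 := by
  have hdet : V.coeff d * V.coeff d + U.coeff d * W.coeff d = 0 := by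
    rw [← coeff_sq_add_mul_two_mul hV hU hW, h2d]
  have hne : U.coeff d ≠ 0 ∨ W.coeff d ≠ 0 := by
    by_contra! h
    have hv : V.coeff d = 0 := mul_self_eq_zero.mp (by simpa [h.1] using hdet)
    rw [coeff_sq_add_mul_two_mul_sub_one hd (natDegree_le_pred hV hv) (natDegree_le_pred hU h.1) hW,
      h.2, mul_zero] at h2d1
    exact zero_ne_one h2d1
  obtain ⟨g, hg⟩ := exists_conj_eq_E21 hdet hne
  obtain ⟨V₁, U₁, W₁, hconj, hf, hV₁, hU₁, hW₁, hcoeff⟩ := exists_constConj_traceless g hV hU hW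
  obtain ⟨hv₁, hu₁, hw₁, -⟩ :=
    matrix_fin_two_eq_iff.mp ((Units.mul_left_inj g).mp ((hcoeff d).symm.trans hg))
  exact ⟨V₁, U₁, W₁, hconj, hf, ⟨hV₁, hU₁, hW₁⟩, hv₁, hu₁, hw₁⟩

lemma exists_constConj_isNormalForm_of_coeff_E21 {d : ℕ} (hd : 0 < d) {V U W : K[X]}
    (hV : V.natDegree ≤ d) (hU : U.natDegree ≤ d) (hW : W.natDegree ≤ d)
    (hv : V.coeff d = 0) (hu : U.coeff d = 0) (hw : W.coeff d = 1)
    (h2d1 : (V ^ 2 + U * W).coeff (2 * d - 1) = 1) :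
    ∃ V' U' W' : K[X], IsNormalForm d V' U' W' ∧ ConstConj !![V, U; W, -V] !![V', U'; W', -V'] := by
  have hu' : U.coeff (d - 1) = 1 := by
    rwa [coeff_sq_add_mul_two_mul_sub_one hd (natDegree_le_pred hV hv) (natDegree_le_pred hU hu) hW,
      hw, mul_one] at h2d1
  obtain ⟨g, hg₀, hg₁⟩ := exists_conj_fix_E21_clear_diag (V.coeff (d - 1)) (W.coeff (d - 1))
  obtain ⟨V', U', W', hconj, -, hV', hU', hW', hcoeff⟩ := exists_constConj_traceless g hV hU hW
  have hcd := (hcoeff d).symm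
  rw [hv, hu, hw, neg_zero, hg₀, Units.mul_left_inj] at hcd
  have hcd1 := (hcoeff (d - 1)).symm
  rw [hu', hg₁, Units.mul_left_inj] at hcd1
  obtain ⟨hv', hu', hw', -⟩ := matrix_fin_two_eq_iff.mp hcd
  obtain ⟨hv'', hu'', -, -⟩ := matrix_fin_two_eq_iff.mp hcd1
  refine ⟨V', U', W', (isNormalForm_iff hd).mpr ?_, hconj⟩
  exact ⟨⟨hV', hU', hW'⟩, ⟨hv', hu', hw'⟩, hv'', hu''⟩

lemma IsNormalForm.eq_of_constConj {d : ℕ} (hd : 0 < d) {V U W V' U' W' : K[X]}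
    (hA : IsNormalForm d V U W) (hB : IsNormalForm d V' U' W')
    (h : ConstConj !![V, U; W, -V] !![V', U'; W', -V']) : V' = V ∧ U' = U ∧ W' = W := by
  obtain ⟨g, hg⟩ := h
  obtain ⟨-, ⟨hv, hu, hw⟩, hv₁, hu₁⟩ := (isNormalForm_iff hd).mp hA
  obtain ⟨-, ⟨hv', hu', hw'⟩, hv₁', hu₁'⟩ := (isNormalForm_iff hd).mp hB
  have hcoeff (k : ℕ) := coe_mul_map_coeff_eq_of_conj hg k
  simp only [map_coeff_traceless] at hcoeff
  have h₀ := hcoeff d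
  rw [hv, hu, hw, hv', hu', hw', neg_zero] at h₀
  have h₁ := hcoeff (d - 1)
  rw [hv₁, hu₁, hv₁', hu₁', neg_zero] at h₁
  have hcomm : Commute ((g : Matrix (Fin 2) (Fin 2) K).map C) !![V, U; W, -V] := by
    obtain ⟨a, ha⟩ := exists_eq_scalar_of_conj_E21 h₀ h₁
    rw [ha, scalar_apply, diagonal_map (map_zero C), ← scalar_apply]
    exact scalar_commute _ (fun _ => Commute.all _ _) _
  rw [hcomm.eq, mul_assoc, map_C_coe_mul_map_C_coe_inv, mul_one] at hg
  obtain ⟨hV, hU, hW, -⟩ := matrix_fin_two_eq_iff.mp hg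
  exact ⟨hV.symm, hU.symm, hW.symm⟩

end

/-- Normal form for traceless `2×2` polynomial matrices whose characteristic polynomial
is monic of degree `2d−1` (nilpotent leading coefficient): a unique representative of the
`GL₂(ℂ)`-conjugacy orbit with `W'` monic of degree `d`, `U'` monic of degree `d−1`, and
`deg V' ≤ d−2` (`V' = 0` when `d = 1`). -/
theorem stmt12 (d : ℕ) (hd : 0 < d) (V U W : Polynomial ℂ)
    (hV : V.degree ≤ d) (hU : U.degree ≤ d) (hW : W.degree ≤ d)
    (hf : (V ^ 2 + U * W).Monic) (hfdeg : (V ^ 2 + U * W).natDegree = 2 * d - 1) :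
    ∃ V' U' W' : Polynomial ℂ,
      (W'.Monic ∧ W'.natDegree = d ∧ U'.Monic ∧ U'.natDegree = d - 1 ∧
        V'.degree < ((d - 1 : ℕ) : WithBot ℕ)) ∧
      (∃ g : GL (Fin 2) ℂ,
        ((g : Matrix (Fin 2) (Fin 2) ℂ).map Polynomial.C) *
            Matrix.of ![![V, U], ![W, -V]] *
            (((g⁻¹ : GL (Fin 2) ℂ) : Matrix (Fin 2) (Fin 2) ℂ).map Polynomial.C) =
          Matrix.of ![![V', U'], ![W', -V']]) ∧
      ∀ V₂ U₂ W₂ : Polynomial ℂ,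
        (W₂.Monic ∧ W₂.natDegree = d ∧ U₂.Monic ∧ U₂.natDegree = d - 1 ∧
          V₂.degree < ((d - 1 : ℕ) : WithBot ℕ)) →
        (∃ g : GL (Fin 2) ℂ,
          ((g : Matrix (Fin 2) (Fin 2) ℂ).map Polynomial.C) *
              Matrix.of ![![V, U], ![W, -V]] *
              (((g⁻¹ : GL (Fin 2) ℂ) : Matrix (Fin 2) (Fin 2) ℂ).map Polynomial.C) =
            Matrix.of ![![V₂, U₂], ![W₂, -V₂]]) →
        V₂ = V' ∧ U₂ = U' ∧ W₂ = W' := by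
  have hVd := natDegree_le_of_degree_le hV
  have hUd := natDegree_le_of_degree_le hU
  have hWd := natDegree_le_of_degree_le hW
  have h2d : (V ^ 2 + U * W).coeff (2 * d) = 0 := coeff_eq_zero_of_natDegree_lt (by omega)
  have h2d1 : (V ^ 2 + U * W).coeff (2 * d - 1) = 1 := hfdeg ▸ hf.coeff_natDegree
  obtain ⟨V₁, U₁, W₁, h₁, hf₁, ⟨hV₁, hU₁, hW₁⟩, hv₁, hu₁, hw₁⟩ :=
    exists_constConj_coeff_E21 hd hVd hUd hWd h2d h2d1
  obtain ⟨V', U', W', hnf, h'⟩ :=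
    exists_constConj_isNormalForm_of_coeff_E21 hd hV₁ hU₁ hW₁ hv₁ hu₁ hw₁ (hf₁ ▸ h2d1)
  have hconj := h₁.trans h'
  exact ⟨V', U', W', hnf, hconj, fun V₂ U₂ W₂ hnf₂ h₂ =>
    hnf.eq_of_constConj hd hnf₂ (hconj.symm.trans h₂)⟩
end
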